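/- arXiv:2510.05980 — 2 statements merged into one kernel-verified Lean document; each statement's English description precedes it below -/
import Mathlib

section
/- For q, β > 0 and every x ≥ 1, Ψ(x) < (1/2)(q + 1/q)·β·e^{-β(x-1)}. -/
open MeasureTheory Filter Real

noncomputable def nu (q β x : ℝ) : ℝ :=
  (1 - q * Real.exp (-β * x)) / (1 + q * Real.exp (-β * x))

noncomputable def G (q β x : ℝ) : ℝ := (1/4) * (nu q β (x+1) - nu q β (x-1))

noncomputable def Psi (q β x : ℝ) : ℝ := (G q β x + G (1/q) β x) / 2

lemma G_lt (q β : ℝ) (hq : 0 < q) (hβ : 0 < β) (x : ℝ) :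
    G q β x < β * q * Real.exp (-β * (x - 1)) := by
  set A := Real.exp (-β * (x - 1)) with hAdef
  set E := Real.exp (-(2*β)) with hEdef
  have hA : 0 < A := Real.exp_pos _
  have hE : 0 < E := Real.exp_pos _
  have hE1 : E < 1 := by
    rw [hEdef]; exact Real.exp_lt_one_iff.mpr (by linarith)
  have hE2 : 1 - 2*β < E := by
    have := Real.add_one_lt_exp (x := -(2*β)) (by linarith)
    rw [hEdef]; linarith
  have hb : Real.exp (-β * (x + 1)) = A * E := by
    rw [hAdef, hEdef, ← Real.exp_add]; ring_nf
  unfold G nu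
  rw [hb]
  have h1 : 0 < 1 + q * A := by positivity
  have h2 : 0 < 1 + q * (A * E) := by positivity
  rw [div_sub_div _ _ (ne_of_gt h2) (ne_of_gt h1), mul_div_assoc', div_lt_iff₀ (by positivity)]
  nlinarith [mul_pos hq hA, mul_pos (mul_pos hq hA) hE,
    mul_pos (mul_pos hβ (mul_pos hq hA)) (mul_pos (mul_pos hq hA) hE),
    mul_pos (mul_pos hβ (mul_pos hq hA)) (mul_pos hq hA),
    mul_pos (mul_pos hβ (mul_pos hq hA)) hE,
    mul_lt_mul_of_pos_left hE2 (mul_pos hq hA)]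

theorem Psi_upper_bound (q β : ℝ) (hq : 0 < q) (hβ : 0 < β) (x : ℝ) (hx : 1 ≤ x) :
    Psi q β x < (1/2) * (q + 1/q) * β * Real.exp (-β * (x - 1)) := by
  have h1 := G_lt q β hq hβ x
  have h2 := G_lt (1/q) β (by positivity) hβ x
  unfold Psi
  have hA : 0 < Real.exp (-β * (x - 1)) := Real.exp_pos _
  nlinarith [h1, h2]
end

section
/- Let q, β > 0, 0 < α < 1 and n ∈ ℕ with n^{1-α} > 2. Then for every x ∈ ℝ, ∫_{{v ∈ ℝ : |nx - v| ≥ n^{1-α}}} Ψ(nx - v) dv < (q + 1/q)·e^{-β(n^{1-α} - 1)}. -/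
open MeasureTheory Filter Real

/-! Ψ is even, since `G q β (-y) = G (1/q) β y`, and the closed form
`G q β y = sinh β · a / ((1 + a e^{-β}) (1 + a e^{β}))` with `a = q e^{-βy}` gives
`Ψ y ≤ (q + 1/q) sinh β / 2 · e^{-βy}`. Shifting by `n x` and folding the two tails onto
`[R, ∞)` bounds the integral by `(q + 1/q) (sinh β / β) e^{-βR}`, and `sinh β < β e^β`. -/

open Set

/-- Only an inequality: for `R < 0` the two tails overlap. -/
lemma setIntegral_abs_sub_ge_le_two_mul_setIntegral_Ici {f : ℝ → ℝ} (hf : f.Even)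
    (hf0 : 0 ≤ f) {R : ℝ} (hfi : IntegrableOn f (Ici R)) (c : ℝ) :
    ∫ v in {v | R ≤ |c - v|}, f (c - v) ≤ 2 * ∫ u in Ici R, f u := by
  have hS : MeasurableSet {v : ℝ | R ≤ |c - v|} := measurableSet_le (by fun_prop) (by fun_prop)
  have hf_abs (u : ℝ) : f |u| = f u := by
    rcases abs_choice u with h | h <;> simp only [h, hf.eq]
  have hindicator : {v | R ≤ |c - v|}.indicator (fun v => f (c - v)) =
      fun v => (Ici R).indicator f |c - v| := by
    ext v
    simp only [indicator_apply, mem_ofPred_eq, mem_Ici, hf_abs]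
  calc ∫ v in {v | R ≤ |c - v|}, f (c - v)
      = ∫ v, (Ici R).indicator f |c - v| := by rw [← integral_indicator hS, hindicator]
    _ = ∫ u, (Ici R).indicator f |u| :=
        integral_sub_left_eq_self (fun u => (Ici R).indicator f |u|) volume c
    _ = 2 * ∫ u in Ioi 0, (Ici R).indicator f u := integral_comp_abs
    _ ≤ 2 * ∫ u, (Ici R).indicator f u := mul_le_mul_of_nonneg_left
        (setIntegral_le_integral ((integrable_indicator_iff measurableSet_Ici).2 hfi)
          (Eventually.of_forall (indicator_nonneg fun u _ => hf0 u))) zero_le_two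
    _ = 2 * ∫ u in Ici R, f u := by rw [integral_indicator measurableSet_Ici]

lemma sinh_lt_mul_exp {x : ℝ} (hx : 0 < x) : sinh x < x * exp x := by
  have h := add_one_lt_exp (show -(2 * x) ≠ 0 by linarith)
  have he : exp x * exp (-(2 * x)) = exp (-x) := by rw [← exp_add]; ring_nf
  rw [sinh_eq]
  nlinarith [exp_pos x]

lemma integrableOn_Ici_exp_neg_mul {β : ℝ} (hβ : 0 < β) (R : ℝ) :
    IntegrableOn (fun y => exp (-β * y)) (Ici R) :=
  (integrableOn_Ici_iff_integrableOn_Ioi).mpr (integrableOn_exp_mul_Ioi (neg_neg_iff_pos.2 hβ) R)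

lemma nu_neg {q : ℝ} (hq : 0 < q) (β x : ℝ) : nu q β (-x) = -nu (1 / q) β x := by
  have hx : exp (-β * -x) = (exp (-β * x))⁻¹ := by rw [← exp_neg]; ring_nf
  have := exp_pos (-β * x)
  unfold nu
  rw [hx]
  field_simp
  ring

lemma G_neg {q : ℝ} (hq : 0 < q) (β y : ℝ) : G q β (-y) = G (1 / q) β y := by
  unfold G
  rw [show -y + 1 = -(y - 1) by ring, show -y - 1 = -(y + 1) by ring, nu_neg hq, nu_neg hq]
  ring

lemma Psi_even {q : ℝ} (hq : 0 < q) (β : ℝ) : (Psi q β).Even := fun y => by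
  unfold Psi
  rw [G_neg hq, G_neg (one_div_pos.2 hq), one_div_one_div, add_comm]

lemma G_eq_sinh_mul_div {q : ℝ} (hq : 0 < q) (β y : ℝ) :
    G q β y = sinh β * (q * exp (-β * y)) /
      ((1 + q * exp (-β * y) * exp (-β)) * (1 + q * exp (-β * y) * exp β)) := by
  unfold G nu
  rw [show -β * (y + 1) = -β * y + -β by ring, show -β * (y - 1) = -β * y + β by ring,
    exp_add, exp_add, sinh_eq]
  field_simp
  ring

lemma G_nonneg {q β : ℝ} (hq : 0 < q) (hβ : 0 ≤ β) (y : ℝ) : 0 ≤ G q β y := by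
  have := sinh_nonneg_iff.2 hβ
  rw [G_eq_sinh_mul_div hq]
  positivity

lemma G_le_sinh_mul_exp {q β : ℝ} (hq : 0 < q) (hβ : 0 ≤ β) (y : ℝ) :
    G q β y ≤ sinh β * (q * exp (-β * y)) := by
  have := sinh_nonneg_iff.2 hβ
  rw [G_eq_sinh_mul_div hq]
  refine div_le_self (by positivity) (one_le_mul_of_one_le_of_one_le ?_ ?_) <;>
    simp only [le_add_iff_nonneg_right] <;> positivity

lemma Psi_nonneg {q β : ℝ} (hq : 0 < q) (hβ : 0 ≤ β) : 0 ≤ Psi q β := fun y => by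
  have := G_nonneg hq hβ y
  have := G_nonneg (one_div_pos.2 hq) hβ y
  unfold Psi
  positivity

lemma Psi_le_sinh_mul_exp {q β : ℝ} (hq : 0 < q) (hβ : 0 ≤ β) (y : ℝ) :
    Psi q β y ≤ (q + 1 / q) * sinh β / 2 * exp (-β * y) := by
  have := G_le_sinh_mul_exp hq hβ y
  have := G_le_sinh_mul_exp (one_div_pos.2 hq) hβ y
  unfold Psi
  linarith

lemma integrableOn_Ici_Psi {q β : ℝ} (hq : 0 < q) (hβ : 0 < β) (R : ℝ) :
    IntegrableOn (Psi q β) (Ici R) := by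
  refine ((integrableOn_Ici_exp_neg_mul hβ R).const_mul ((q + 1 / q) * sinh β / 2)).mono'
    (by unfold Psi G nu; fun_prop) (ae_of_all _ fun y => ?_)
  rw [norm_of_nonneg (Psi_nonneg hq hβ.le y)]
  exact Psi_le_sinh_mul_exp hq hβ.le y

lemma setIntegral_Ici_Psi_le {q β : ℝ} (hq : 0 < q) (hβ : 0 < β) (R : ℝ) :
    ∫ y in Ici R, Psi q β y ≤ (q + 1 / q) * sinh β / (2 * β) * exp (-β * R) :=
  calc ∫ y in Ici R, Psi q β y
      ≤ ∫ y in Ici R, (q + 1 / q) * sinh β / 2 * exp (-β * y) :=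
        setIntegral_mono_on (integrableOn_Ici_Psi hq hβ R)
          ((integrableOn_Ici_exp_neg_mul hβ R).const_mul _) measurableSet_Ici
          fun y _ => Psi_le_sinh_mul_exp hq hβ.le y
    _ = (q + 1 / q) * sinh β / 2 * (-exp (-β * R) / -β) := by
        rw [integral_const_mul, integral_Ici_eq_integral_Ioi,
          integral_exp_mul_Ioi (neg_neg_iff_pos.2 hβ)]
    _ = (q + 1 / q) * sinh β / (2 * β) * exp (-β * R) := by
        rw [neg_div_neg_eq]; ring

theorem Psi_tail_integral_general (q β α : ℝ) (hq : 0 < q) (hβ : 0 < β)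
    (n : ℕ) (x : ℝ) :
    (∫ v in {v : ℝ | (n : ℝ) ^ (1 - α) ≤ |(n : ℝ) * x - v|},
        Psi q β ((n : ℝ) * x - v)) <
      (q + 1/q) * Real.exp (-β * ((n : ℝ) ^ (1 - α) - 1)) := by
  set R := (n : ℝ) ^ (1 - α)
  calc ∫ v in {v : ℝ | R ≤ |(n : ℝ) * x - v|}, Psi q β ((n : ℝ) * x - v)
      ≤ 2 * ∫ y in Ici R, Psi q β y :=
        setIntegral_abs_sub_ge_le_two_mul_setIntegral_Ici (Psi_even hq β)
          (Psi_nonneg hq hβ.le) (integrableOn_Ici_Psi hq hβ R) _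
    _ ≤ 2 * ((q + 1 / q) * sinh β / (2 * β) * exp (-β * R)) := by
        gcongr
        exact setIntegral_Ici_Psi_le hq hβ R
    _ = (q + 1 / q) * (sinh β / β) * exp (-β * R) := by ring
    _ < (q + 1 / q) * exp β * exp (-β * R) := by
        gcongr
        exact (div_lt_iff₀' hβ).2 (sinh_lt_mul_exp hβ)
    _ = (q + 1/q) * Real.exp (-β * (R - 1)) := by rw [mul_assoc, ← exp_add]; ring_nf

theorem Psi_tail_integral (q β α : ℝ) (hq : 0 < q) (hβ : 0 < β)
    (hα0 : 0 < α) (hα1 : α < 1) (n : ℕ) (hn : 2 < (n : ℝ) ^ (1 - α)) (x : ℝ) :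
    (∫ v in {v : ℝ | (n : ℝ) ^ (1 - α) ≤ |(n : ℝ) * x - v|},
        Psi q β ((n : ℝ) * x - v)) <
      (q + 1/q) * Real.exp (-β * ((n : ℝ) ^ (1 - α) - 1)) :=
  Psi_tail_integral_general q β α hq hβ n x
end
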